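/- arXiv:2202.09220 — 3 statements merged into one kernel-verified Lean document; each statement's English description precedes it below -/
import Mathlib

section
/- Let Z and V be vector spaces with bilinear operations (·, ↼, ⇀, ▷, ◁, ω, *) where · : Z×Z→Z is a Zinbiel multiplication, ↼ : Z×V→Z, ⇀ : V×Z→Z, ▷ : Z×V→V, ◁ : V×Z→V, ω : V×V→Z, * : V×V→V. Then the multiplication (x,u)∘(y,v) := (x·y + x↼v + u⇀y + ω(u,v), x▷v + u◁y + u*v) on Z⊕V is a Zinbiel algebra if and only if the twelve compatibility conditions (Z1)–(Z12) of the extending-structure axioms hold (with i fixed), namely: (V, ◁, ▷) is a Z-bimodule; (x↼v)·y + (x▷v)⇀y = x·(v⇀y + y↼v) + x↼(v◁y + y▷v); (u⇀x)·y + (u◁x)⇀y = u⇀(x·y + y·x); ω(u,v)·x + (u*v)⇀x = u⇀(v⇀x + x↼v) + ω(u, v◁x + x▷v); (u*v)◁x = u◁(v⇀x + x↼v) + u*(v◁x + x▷v); (x·y)↼w = x·(y↼w + w⇀y) + x↼(y▷w + w◁y); (x↼v)↼w + ω(x▷v, w) = x·(ω(v,w) + ω(w,v)) + x↼(v*w +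 w*v); (x↼v)▷w + (x▷v)*w = x▷(v*w + w*v); (u⇀x)↼w + ω(u◁x, w) = u⇀(x↼w + w⇀x) + ω(u, w◁x + x▷w); (u⇀x)▷w + (u◁x)*w = u◁(x↼w + w⇀x) + u*(x▷w + w◁x); ω(u,v)↼w + ω(u*v, w) = u⇀(ω(v,w) + ω(w,v)) + ω(u, v*w + w*v); ω(u,v)▷w + (u*v)*w = u◁(ω(v,w) + ω(w,v)) + u*(v*w + w*v). -/
/-!
The Zinbiel defect `(a, b, c) ↦ (a b) c - a (b c + c b)` of a bilinear product is additive in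
each argument, so on `Z × V` it vanishes everywhere as soon as it vanishes when each argument
lies in `Z` or in `V`. Evaluating the unified product on these eight kinds of triples and
splitting into `Z`- and `V`-components gives sixteen identities: for three elements of `Z` they
are the Zinbiel identity of `Z` and `0 = 0`, the other fourteen are (Z1)–(Z12).
-/

def IsZinbiel {M : Type*} [Add M] (μ : M → M → M) : Prop :=
  ∀ a b c, μ (μ a b) c = μ a (μ b c + μ c b)

open LinearMap in
theorem isZinbiel_prod_iff {R A B : Type*} [CommSemiring R] [AddCommMonoid A] [Module R A]
    [AddCommMonoid B] [Module R B] (μ : A × B →ₗ[R] A × B →ₗ[R] A × B) :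
    IsZinbiel (fun p q => μ p q) ↔
      ∀ s t r : A ⊕ B, let ι := Sum.elim (inl R A B) (inr R A B)
        μ (μ (ι s) (ι t)) (ι r) = μ (ι s) (μ (ι t) (ι r) + μ (ι r) (ι t)) := by
  set ι : A ⊕ B → A × B := Sum.elim (inl R A B) (inr R A B)
  have hι (p : A × B) : p = ι (.inl p.1) + ι (.inr p.2) := by simp [ι]
  refine ⟨fun h s t r => h _ _ _, fun h a b c => ?_⟩
  rw [hι a, hι b, hι c]
  simp only at h
  simp only [map_add, LinearMap.add_apply, h]
  abel

section UnifiedProduct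

open LinearMap

variable {R Z V : Type*} [CommSemiring R] [AddCommMonoid Z] [Module R Z]
  [AddCommMonoid V] [Module R V]
  (mul : Z →ₗ[R] Z →ₗ[R] Z) (hl : Z →ₗ[R] V →ₗ[R] Z) (hr : V →ₗ[R] Z →ₗ[R] Z)
  (tr : Z →ₗ[R] V →ₗ[R] V) (tl : V →ₗ[R] Z →ₗ[R] V) (ω : V →ₗ[R] V →ₗ[R] Z)
  (st : V →ₗ[R] V →ₗ[R] V)

def unifiedProduct : Z × V →ₗ[R] Z × V →ₗ[R] Z × V :=
  let π₁ := fst R Z V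
  let π₂ := snd R Z V
  (mul.compl₁₂ π₁ π₁ + hl.compl₁₂ π₁ π₂ + hr.compl₁₂ π₂ π₁ + ω.compl₁₂ π₂ π₂).compr₂ (inl R Z V) +
    (tr.compl₁₂ π₁ π₂ + tl.compl₁₂ π₂ π₁ + st.compl₁₂ π₂ π₂).compr₂ (inr R Z V)

@[simp]
theorem unifiedProduct_apply (p q : Z × V) :
    unifiedProduct mul hl hr tr tl ω st p q =
      (mul p.1 q.1 + hl p.1 q.2 + hr p.2 q.1 + ω p.2 q.2,
        tr p.1 q.2 + tl p.2 q.1 + st p.2 q.2) := by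
  ext <;> simp [unifiedProduct]

end UnifiedProduct

/-- The unified product multiplication on `Z ⊕ V` is a Zinbiel multiplication if
and only if the compatibility conditions (Z1)–(Z12) hold. -/
theorem unified_product_zinbiel_iff
    (k Z V : Type*) [Field k] [AddCommGroup Z] [Module k Z]
    [AddCommGroup V] [Module k V]
    (mul : Z →ₗ[k] Z →ₗ[k] Z)
    (hl : Z →ₗ[k] V →ₗ[k] Z)  -- x ↼ v
    (hr : V →ₗ[k] Z →ₗ[k] Z)  -- u ⇀ y
    (tr : Z →ₗ[k] V →ₗ[k] V)  -- x ▷ v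
    (tl : V →ₗ[k] Z →ₗ[k] V)  -- u ◁ y
    (ω : V →ₗ[k] V →ₗ[k] Z)
    (st : V →ₗ[k] V →ₗ[k] V)  -- u * v
    (hzin : ∀ x y z : Z, mul (mul x y) z = mul x (mul y z + mul z y))
    (m : Z × V → Z × V → Z × V)
    (hm : ∀ p q : Z × V,
      m p q = (mul p.1 q.1 + hl p.1 q.2 + hr p.2 q.1 + ω p.2 q.2,
               tr p.1 q.2 + tl p.2 q.1 + st p.2 q.2)) :
    (∀ a b c : Z × V, m (m a b) c = m a (m b c + m c b)) ↔
    ((∀ (x y : Z) (w : V), tr (mul x y) w = tr x (tr y w + tl w y)) ∧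
     (∀ (x : Z) (v : V) (z : Z), tl (tr x v) z = tr x (tl v z + tr z v)) ∧
     (∀ (u : V) (y z : Z), tl (tl u y) z = tl u (mul y z + mul z y)) ∧
     -- (Z2)
     (∀ (x : Z) (v : V) (y : Z),
        mul (hl x v) y + hr (tr x v) y
          = mul x (hr v y + hl y v) + hl x (tl v y + tr y v)) ∧
     -- (Z3)
     (∀ (u : V) (x y : Z),
        mul (hr u x) y + hr (tl u x) y = hr u (mul x y + mul y x)) ∧
     -- (Z4)
     (∀ (u v : V) (x : Z),
        mul (ω u v) x + hr (st u v) x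
          = hr u (hr v x + hl x v) + ω u (tl v x + tr x v)) ∧
     -- (Z5)
     (∀ (u v : V) (x : Z),
        tl (st u v) x = tl u (hr v x + hl x v) + st u (tl v x + tr x v)) ∧
     -- (Z6)
     (∀ (x y : Z) (w : V),
        hl (mul x y) w = mul x (hl y w + hr w y) + hl x (tr y w + tl w y)) ∧
     -- (Z7)
     (∀ (x : Z) (v w : V),
        hl (hl x v) w + ω (tr x v) w
          = mul x (ω v w + ω w v) + hl x (st v w + st w v)) ∧
     -- (Z8)
     (∀ (x : Z) (v w : V),
        tr (hl x v) w + st (tr x v) w = tr x (st v w + st w v)) ∧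
     -- (Z9)
     (∀ (u : V) (x : Z) (w : V),
        hl (hr u x) w + ω (tl u x) w
          = hr u (hl x w + hr w x) + ω u (tl w x + tr x w)) ∧
     -- (Z10)
     (∀ (u : V) (x : Z) (w : V),
        tr (hr u x) w + st (tl u x) w
          = tl u (hl x w + hr w x) + st u (tr x w + tl w x)) ∧
     -- (Z11)
     (∀ (u v w : V),
        hl (ω u v) w + ω (st u v) w
          = hr u (ω v w + ω w v) + ω u (st v w + st w v)) ∧
     -- (Z12)
     (∀ (u v w : V),
        tr (ω u v) w + st (st u v) w
          = tl u (ω v w + ω w v) + st u (st v w + st w v))) := by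
  obtain rfl : m = fun p q => unifiedProduct mul hl hr tr tl ω st p q :=
    funext₂ fun p q => (hm p q).trans (unifiedProduct_apply ..).symm
  change IsZinbiel (unifiedProduct mul hl hr tr tl ω st ·) ↔ _
  rw [isZinbiel_prod_iff]
  -- `add_comm` only reorders the summands `w ◁ x + x ▷ w`, which (Z9) writes the other way round.
  simp only [Sum.forall, Sum.elim_inl, Sum.elim_inr, LinearMap.inl_apply, LinearMap.inr_apply,
    unifiedProduct_apply, Prod.mk_add_mk, Prod.mk.injEq, map_zero, LinearMap.zero_apply, add_zero,
    zero_add, hzin, true_and, forall_and, forall_const, add_comm (tl _ _) (tr _ _)]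
  tauto
end

section
/- Let E be a Zinbiel algebra, Z ⊆ E a subalgebra, and p : E → Z a linear projection with p(x) = x for all x ∈ Z, and set V := ker p. Define u⇀x := p(u·x), x↼u := p(x·u), x▷u := x·u − p(x·u), u◁x := u·x − p(u·x), ω(u,v) := p(u·v), u*v := u·v − p(u·v), for x,y ∈ Z, u,v ∈ V. Then the map ψ : Z⊕V → E, ψ(x,u) = x+u, is a linear isomorphism, and transporting the multiplication of E along ψ yields exactly the unified product multiplication (x,u)∘(y,v) = (x·y + x↼v + u⇀y + ω(u,v), x▷v + u◁y + u*v). -/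
/-!
Since `p` is a projection onto `Z`, the subspaces `Z` and `ker p` are complementary, so
`(x, u) ↦ x + u` is a linear isomorphism with inverse `e ↦ (p e, e - p e)`. Expanding
`(x + u)(y + v)` bilinearly into four terms and applying `p` and `id - p` to each gives the
two components of the unified product; `x y` contributes only to the first one because `Z`
is a subalgebra, so `p` fixes it.
-/

section Bilinear

variable {R M N : Type*} [CommSemiring R] [AddCommMonoid M] [Module R M]
  [AddCommMonoid N] [Module R N]

theorem LinearMap.map_add_add₂ (f : M →ₗ[R] M →ₗ[R] N) (x u y v : M) :
    f (x + u) (y + v) = f x y + f x v + f u y + f u v := by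
  simp only [map_add, LinearMap.add_apply]
  abel

theorem LinearMap.apply_map_add_add₂_of_apply_eq (f : M →ₗ[R] M →ₗ[R] N) (p : N →ₗ[R] N)
    {x y : M} (hxy : p (f x y) = f x y) (u v : M) :
    p (f (x + u) (y + v)) = f x y + p (f x v) + p (f u y) + p (f u v) := by
  rw [f.map_add_add₂, map_add, map_add, map_add, hxy]

end Bilinear

theorem LinearMap.map_add_add₂_sub_apply_of_apply_eq {R M N : Type*} [CommRing R]
    [AddCommGroup M] [Module R M] [AddCommGroup N] [Module R N]
    (f : M →ₗ[R] M →ₗ[R] N) (p : N →ₗ[R] N) {x y : M} (hxy : p (f x y) = f x y) (u v : M) :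
    f (x + u) (y + v) - p (f (x + u) (y + v))
      = (f x v - p (f x v)) + (f u y - p (f u y)) + (f u v - p (f u v)) := by
  rw [f.apply_map_add_add₂_of_apply_eq p hxy, f.map_add_add₂]
  abel

theorem LinearMap.IsProj.bijective_add {R E : Type*} [Ring R] [AddCommGroup E] [Module R E]
    {Z : Submodule R E} {p : E →ₗ[R] E} (hp : LinearMap.IsProj Z p) :
    Function.Bijective (fun q : Z × (LinearMap.ker p) => (q.1 : E) + (q.2 : E)) :=
  (Submodule.prodEquivOfIsCompl Z (LinearMap.ker p) hp.isCompl).bijective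

theorem unified_product_from_projection_general
    (k E : Type*) [Field k] [AddCommGroup E] [Module k E]
    (mul : E →ₗ[k] E →ₗ[k] E)
    (Z : Submodule k E)
    (hZ : ∀ x ∈ Z, ∀ y ∈ Z, mul x y ∈ Z)
    (p : E →ₗ[k] E)
    (hpZ : ∀ x : E, p x ∈ Z)
    (hpid : ∀ x ∈ Z, p x = x) :
    Function.Bijective
      (fun q : Z × (LinearMap.ker p) => (q.1 : E) + (q.2 : E)) ∧
    ∀ x ∈ Z, ∀ y ∈ Z, ∀ u ∈ LinearMap.ker p, ∀ v ∈ LinearMap.ker p,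
      p (mul (x + u) (y + v))
          = mul x y + p (mul x v) + p (mul u y) + p (mul u v) ∧
      mul (x + u) (y + v) - p (mul (x + u) (y + v))
          = (mul x v - p (mul x v)) + (mul u y - p (mul u y))
              + (mul u v - p (mul u v)) := by
  refine ⟨LinearMap.IsProj.bijective_add ⟨hpZ, hpid⟩, fun x hx y hy u _ v _ => ?_⟩
  have hxy : p (mul x y) = mul x y := hpid _ (hZ x hx y hy)
  exact ⟨mul.apply_map_add_add₂_of_apply_eq p hxy u v,
    mul.map_add_add₂_sub_apply_of_apply_eq p hxy u v⟩

/-- Any Zinbiel algebra structure on `E` containing a subalgebra `Z`, with a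
linear projection `p` onto `Z` and complement `V = ker p`, is isomorphic (via
`(x,u) ↦ x + u`) to the unified product of `Z` and `V` with structure maps
obtained from `p`. -/
theorem unified_product_from_projection
    (k E : Type*) [Field k] [AddCommGroup E] [Module k E]
    (mul : E →ₗ[k] E →ₗ[k] E)
    (hzin : ∀ x y z : E, mul (mul x y) z = mul x (mul y z + mul z y))
    (Z : Submodule k E)
    (hZ : ∀ x ∈ Z, ∀ y ∈ Z, mul x y ∈ Z)
    (p : E →ₗ[k] E)
    (hpZ : ∀ x : E, p x ∈ Z)
    (hpid : ∀ x ∈ Z, p x = x) :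
    Function.Bijective
      (fun q : Z × (LinearMap.ker p) => (q.1 : E) + (q.2 : E)) ∧
    ∀ x ∈ Z, ∀ y ∈ Z, ∀ u ∈ LinearMap.ker p, ∀ v ∈ LinearMap.ker p,
      p (mul (x + u) (y + v))
          = mul x y + p (mul x v) + p (mul u y) + p (mul u v) ∧
      mul (x + u) (y + v) - p (mul (x + u) (y + v))
          = (mul x v - p (mul x v)) + (mul u y - p (mul u y))
              + (mul u v - p (mul u v)) :=
  unified_product_from_projection_general k E mul Z hZ p hpZ hpid
end

section
/- Let E be a Zinbiel algebra that factorizes through subalgebras Z and V, i.e. Z and V are Zinbiel subalgebras of E with E = Z ⊕ V as vector spaces. Define, for x ∈ Z, u ∈ V, the components u⇀x := p_Z(u·x), u◁x := p_V(u·x), x↼u := p_Z(x·u), x▷u := p_V(x·u) where p_Z, p_V are the projections onto Z and V. Then the map (x,u) ↦ x+u is an isomorphism of Zinbiel algebras from the bicrossed product Z ⊕ V with multiplication (x,u)∘(y,v) = (x·y + x↼v + u⇀y, x▷v + u◁y + u·v) to E. -/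
/-! The map `(x, u) ↦ x + u` is the linear equivalence `Z × V ≃ E` of the decomposition
`E = Z ⊕ V`, and the bicrossed product multiplication is `·` transported along it: expand
`(x + u)·(y + v)` by bilinearity and split each mixed product `x·v`, `u·y` into its `Z`-part plus
its `V`-part. -/

namespace Submodule

variable {R M : Type*} [CommRing R] [AddCommGroup M] [Module R M]

theorem bilin_add_add_eq_of_isCompl (mul : M →ₗ[R] M →ₗ[R] M) {Z V : Submodule R M}
    (h : IsCompl Z V) (x y : Z) (u v : V) :
    mul ((x : M) + (u : M)) ((y : M) + (v : M))
      = (mul x y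
          + (Z.projectionOnto V h (mul x v) : M)
          + (Z.projectionOnto V h (mul u y) : M))
        + ((V.projectionOnto Z h.symm (mul x v) : M)
          + (V.projectionOnto Z h.symm (mul u y) : M)
          + mul u v) := by
  have split (e : M) :
      (Z.projectionOnto V h e : M) + (V.projectionOnto Z h.symm e : M) = e :=
    projection_add_projection_eq_self h e
  simp only [map_add, LinearMap.add_apply]
  conv_lhs => rw [← split (mul x v), ← split (mul u y)]
  abel

end Submodule

theorem bicrossed_product_factorization_general
    (k E : Type*) [Field k] [AddCommGroup E] [Module k E]
    (mul : E →ₗ[k] E →ₗ[k] E)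
    (Z V : Submodule k E)
    (h : IsCompl Z V) :
    Function.Bijective (fun q : Z × V => (q.1 : E) + (q.2 : E)) ∧
    ∀ (x y : Z) (u v : V),
      mul ((x : E) + (u : E)) ((y : E) + (v : E))
        = (mul x y
            + (Z.linearProjOfIsCompl V h (mul x v) : E)
            + (Z.linearProjOfIsCompl V h (mul u y) : E))
          + ((V.linearProjOfIsCompl Z h.symm (mul x v) : E)
            + (V.linearProjOfIsCompl Z h.symm (mul u y) : E)
            + mul u v) :=
  ⟨(Z.prodEquivOfIsCompl V h).bijective, Z.bilin_add_add_eq_of_isCompl mul h⟩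

/-- If a Zinbiel algebra `E` factorizes through subalgebras `Z` and `V`
(`E = Z ⊕ V`), then `(x,u) ↦ x + u` is an isomorphism of Zinbiel algebras from
the bicrossed product `Z ⊕ V` (with structure maps obtained from the
projections) to `E`. -/
theorem bicrossed_product_factorization
    (k E : Type*) [Field k] [AddCommGroup E] [Module k E]
    (mul : E →ₗ[k] E →ₗ[k] E)
    (hzin : ∀ x y z : E, mul (mul x y) z = mul x (mul y z + mul z y))
    (Z V : Submodule k E)
    (hZ : ∀ x ∈ Z, ∀ y ∈ Z, mul x y ∈ Z)
    (hV : ∀ u ∈ V, ∀ v ∈ V, mul u v ∈ V)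
    (h : IsCompl Z V) :
    Function.Bijective (fun q : Z × V => (q.1 : E) + (q.2 : E)) ∧
    ∀ (x y : Z) (u v : V),
      mul ((x : E) + (u : E)) ((y : E) + (v : E))
        = (mul x y
            + (Z.linearProjOfIsCompl V h (mul x v) : E)
            + (Z.linearProjOfIsCompl V h (mul u y) : E))
          + ((V.linearProjOfIsCompl Z h.symm (mul x v) : E)
            + (V.linearProjOfIsCompl Z h.symm (mul u y) : E)
            + mul u v) :=
  bicrossed_product_factorization_general k E mul Z V h
end
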